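/- There is a universal constant C > 0 such that the following holds for all n ≥ 1. Let H be a finite-dimensional complex Hilbert space, ρ a density operator on H, δ ≥ 0, and let x_1, …, x_n, z_1, …, z_n be self-adjoint unitaries on H satisfying: (i) ‖x_i z_i + z_i x_i‖_ρ² ≤ δ for all i; (ii) ‖x_i x_j − x_j x_i‖_ρ² ≤ δ, ‖z_i z_j − z_j z_i‖_ρ² ≤ δ, and ‖x_i z_j − z_j x_i‖_ρ² ≤ δ for all i ≠ j; and (iii) for every w ∈ {x_1,…,x_n,z_1,…,z_n} there is a unitary ŵ on H commuting with all of x_1,…,x_n,z_1,…,z_n such that ‖w − ŵ‖_ρ² ≤ δ. For α ∈ {0,1} and S, T ⊆ [n], define f(α, S, T) := (−1)^α · (Π_{i∈S, increasing} x_i) · (Π_{j∈T, increasing} z_j). Then for all triples (α, S, T) and (α', S', T'), with (α'', S'', T'') := (α + α' + |T ∩ S'| mod 2, S Δ S', T Δ T'), we have ‖f(α,S,T) f(α',S',T') − f(α'',S'',T'')‖_ρ² ≤ C n⁶ δ. -/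

import Mathlib

set_option linter.unusedSectionVars false
set_option linter.unusedVariables false
set_option maxHeartbeats 1600000
attribute [local instance] Matrix.frobeniusSeminormedAddCommGroup
attribute [local instance] Matrix.frobeniusNormedSpace


open Matrix
open scoped ComplexOrder

/-- The squared ρ-norm ‖A‖_ρ² = Re Tr(AᴴAρ). -/
noncomputable def rhoNormSq {m : Type*} [Fintype m] (ρ A : Matrix m m ℂ) : ℝ :=
  ((Aᴴ * A * ρ).trace).re

/-- The word `f(α,S,T) = (−1)^α (Π_{i∈S, increasing} x_i)(Π_{j∈T, increasing} z_j)`. -/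
noncomputable def pauliWord {m : Type*} [Fintype m] [DecidableEq m] {n : ℕ}
    (x z : Fin n → Matrix m m ℂ) (α : Bool) (S T : Finset (Fin n)) : Matrix m m ℂ :=
  (if α then (-1 : ℂ) else 1) •
    (((S.sort (· ≤ ·)).map x).prod * ((T.sort (· ≤ ·)).map z).prod)

namespace PauliStab
variable {m : Type} [Fintype m] [DecidableEq m]
variable {m : Type} [Fintype m] [DecidableEq m]

lemma conj_mul_self (z : ℂ) : star z * z = ((‖z‖^2 : ℝ) : ℂ) := by
  rw [Complex.star_def, mul_comm, Complex.mul_conj']; push_cast; ring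

lemma frob_sq (M : Matrix m m ℂ) : ‖M‖^2 = (∑ i, ∑ j, ‖M i j‖^2) := by
  rw [Matrix.frobenius_norm_def]
  rw [← Real.rpow_natCast _ 2, ← Real.rpow_mul (by positivity)]
  norm_num

lemma trace_eq_frob (M : Matrix m m ℂ) : ((Mᴴ * M).trace).re = ‖M‖^2 := by
  have h : (Mᴴ * M).trace = ((‖M‖^2 : ℝ) : ℂ) := by
    rw [frob_sq]
    simp only [Matrix.trace, Matrix.diag, Matrix.mul_apply, Matrix.conjTranspose_apply,
      conj_mul_self]
    push_cast
    rw [Finset.sum_comm]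
  rw [h, Complex.ofReal_re]

lemma unitary_left (U A : Matrix m m ℂ) (hU : U ∈ Matrix.unitaryGroup m ℂ) :
    ‖U * A‖ = ‖A‖ := by
  have h2 : ‖U * A‖^2 = ‖A‖^2 := by
    rw [← trace_eq_frob, ← trace_eq_frob, Matrix.conjTranspose_mul, mul_assoc,
      ← mul_assoc Uᴴ U A, show Uᴴ * U = 1 from Unitary.star_mul_self_of_mem hU, one_mul]
  nlinarith [norm_nonneg (U*A), norm_nonneg A]

lemma commute_closure {G : Set (Matrix m m ℂ)} {a b : Matrix m m ℂ}
    (h : ∀ g ∈ G, Commute a g) (hb : b ∈ Submonoid.closure G) : Commute a b := by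
  induction hb using Submonoid.closure_induction with
  | mem g hg => exact h g hg
  | one => exact Commute.one_right a
  | mul x y _ _ hx hy => exact hx.mul_right hy

lemma closure_unitary {G : Set (Matrix m m ℂ)}
    (hGu : G ⊆ (Matrix.unitaryGroup m ℂ : Set _)) {a : Matrix m m ℂ}
    (ha : a ∈ Submonoid.closure G) : a ∈ Matrix.unitaryGroup m ℂ :=
  Submonoid.closure_le.mpr hGu ha

section TailSec
variable (s : Matrix m m ℂ) (G : Set (Matrix m m ℂ)) (K : ℝ)

/-- distance -/
noncomputable def dd (A B : Matrix m m ℂ) : ℝ := ‖(A - B) * s‖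

lemma dd_nonneg (A B) : 0 ≤ dd s A B := norm_nonneg _
lemma dd_self (A) : dd s A A = 0 := by simp [dd]
lemma dd_eq {A B : Matrix m m ℂ} (h : A = B) : dd s A B = 0 := by simp [dd, h]
lemma dd_congr {A B A' B' : Matrix m m ℂ} (h1 : A = A') (h2 : B = B') :
    dd s A B = dd s A' B' := by rw [h1, h2]
lemma dd_triangle (A B C) : dd s A C ≤ dd s A B + dd s B C := by
  have h : (A - C) * s = (A - B) * s + (B - C) * s := by
    rw [← add_mul, sub_add_sub_cancel]
  rw [dd, h]
  exact (norm_add_le _ _).trans (by rfl)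
lemma dd_left {U : Matrix m m ℂ} (hU : U ∈ Matrix.unitaryGroup m ℂ) (A B) :
    dd s (U * A) (U * B) = dd s A B := by
  rw [dd, ← mul_sub, mul_assoc, unitary_left _ _ hU]; rfl
lemma dd_smul (c : ℂ) (A B) : dd s (c • A) (c • B) = ‖c‖ * dd s A B := by
  rw [dd, ← smul_sub, smul_mul_assoc, norm_smul]; rfl

lemma tail_absorb (hK : 0 ≤ K)
    (hGu : G ⊆ (Matrix.unitaryGroup m ℂ : Set _))
    (hGhat : ∀ g ∈ G, ∃ gh, gh ∈ Matrix.unitaryGroup m ℂ ∧ (∀ g' ∈ G, Commute gh g') ∧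
      ‖(g - gh) * s‖ ≤ K) :
    ∀ (R : List (Matrix m m ℂ)), (∀ r ∈ R, r ∈ G) →
    ∀ (A B : Matrix m m ℂ), A ∈ Submonoid.closure G → B ∈ Submonoid.closure G →
    ∀ (c : ℂ), ‖c‖ = 1 →
    ‖(A - c • B) * R.prod * s‖ ≤ ‖(A - c • B) * s‖ + 2 * R.length * K := by
  intro R
  induction R with
  | nil => intro _ A B _ _ c _; simp
  | cons w R ih =>
    intro hR A B hA hB c hc
    have hw : w ∈ G := hR w List.mem_cons_self
    obtain ⟨gh, hghU, hghC, hghK⟩ := hGhat w hw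
    have hA' : A * w ∈ Submonoid.closure G :=
      mul_mem hA (Submonoid.subset_closure hw)
    have hB' : B * w ∈ Submonoid.closure G :=
      mul_mem hB (Submonoid.subset_closure hw)
    have e1 : (A - c • B) * (w :: R).prod = (A * w - c • (B * w)) * R.prod := by
      rw [List.prod_cons, ← mul_assoc, sub_mul, smul_mul_assoc]
    have step : ‖(A * w - c • (B * w)) * s‖ ≤ ‖(A - c • B) * s‖ + 2 * K := by
      have cA : gh * A = A * gh := (commute_closure hghC hA).eq
      have cB : gh * B = B * gh := (commute_closure hghC hB).eq
      have keyM : A * w - c • (B * w) =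
          gh * (A - c • B) + (A * (w - gh) - c • (B * (w - gh))) := by
        rw [mul_sub gh, mul_smul_comm, cA, cB, mul_sub A, mul_sub B, smul_sub]
        abel
      have key : (A * w - c • (B * w)) * s =
          gh * ((A - c • B) * s) + (A * ((w - gh) * s) - c • (B * ((w - gh) * s))) := by
        simp only [keyM, add_mul, sub_mul, mul_assoc, smul_mul_assoc]
      calc ‖(A * w - c • (B * w)) * s‖
          = ‖gh * ((A - c•B) * s) + (A * ((w - gh) * s) - c • (B * ((w - gh) * s)))‖ := by
            rw [key]
        _ ≤ ‖gh * ((A - c•B) * s)‖ + (‖A * ((w - gh) * s)‖ + ‖c • (B * ((w - gh) * s))‖) := by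
            refine (norm_add_le _ _).trans ?_
            gcongr
            exact norm_sub_le _ _
        _ ≤ ‖(A - c•B) * s‖ + 2 * K := by
            rw [unitary_left _ _ hghU, unitary_left _ _ (closure_unitary hGu hA),
              norm_smul, hc, one_mul, unitary_left _ _ (closure_unitary hGu hB)]
            linarith
    calc ‖(A - c • B) * (w :: R).prod * s‖ = ‖(A * w - c • (B * w)) * R.prod * s‖ := by rw [e1]
      _ ≤ ‖(A * w - c • (B * w)) * s‖ + 2 * R.length * K :=
          ih (fun r hr => hR r (List.mem_cons_of_mem w hr)) _ _ hA' hB' c hc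
      _ ≤ ‖(A - c • B) * s‖ + 2 * (w :: R).length * K := by
          simp only [List.length_cons]; push_cast; nlinarith
end TailSec

section Words
variable {n : ℕ} {s : Matrix m m ℂ} {G : Set (Matrix m m ℂ)} {K : ℝ}

lemma norm_list_prod_one : ∀ {l : List ℂ}, (∀ c ∈ l, ‖c‖ = 1) → ‖l.prod‖ = 1 := by
  intro l
  induction l with
  | nil => intro _; simp
  | cons c l ih =>
    intro h
    rw [List.prod_cons, norm_mul, h c List.mem_cons_self,
      ih (fun d hd => h d (List.mem_cons_of_mem c hd)), one_mul]

lemma swap_move (hK : 0 ≤ K)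
    (hGu : G ⊆ (Matrix.unitaryGroup m ℂ : Set _))
    (hGhat : ∀ g ∈ G, ∃ gh, gh ∈ Matrix.unitaryGroup m ℂ ∧ (∀ g' ∈ G, Commute gh g') ∧
      ‖(g - gh) * s‖ ≤ K)
    {u v : Matrix m m ℂ} (hu : u ∈ G) (hv : v ∈ G) {ε : ℂ} (hε : ‖ε‖ = 1)
    (hswap : ‖(u * v - ε • (v * u)) * s‖ ≤ K)
    (R : List (Matrix m m ℂ)) (hR : ∀ r ∈ R, r ∈ G) :
    dd s (u * (v * R.prod)) (ε • (v * (u * R.prod))) ≤ K + 2 * R.length * K := by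
  have e : u * (v * R.prod) - ε • (v * (u * R.prod)) = (u * v - ε • (v * u)) * R.prod := by
    rw [sub_mul, smul_mul_assoc, mul_assoc, mul_assoc]
  rw [dd, e]
  refine (tail_absorb s G K hK hGu hGhat R hR (u*v) (v*u)
    (mul_mem (Submonoid.subset_closure hu) (Submonoid.subset_closure hv))
    (mul_mem (Submonoid.subset_closure hv) (Submonoid.subset_closure hu)) ε hε).trans ?_
  have : (0:ℝ) ≤ 2 * R.length * K := by positivity
  linarith

lemma move_letter (hK : 0 ≤ K)
    (hGu : G ⊆ (Matrix.unitaryGroup m ℂ : Set _))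
    (hGhat : ∀ g ∈ G, ∃ gh, gh ∈ Matrix.unitaryGroup m ℂ ∧ (∀ g' ∈ G, Commute gh g') ∧
      ‖(g - gh) * s‖ ≤ K)
    (y : Fin n → Matrix m m ℂ) (hy : ∀ i, y i ∈ G)
    (w : Matrix m m ℂ) (hw : w ∈ G)
    (εf : Fin n → ℂ) (hεf : ∀ i, ‖εf i‖ = 1)
    (hswap : ∀ i, ‖(w * y i - εf i • (y i * w)) * s‖ ≤ K) :
    ∀ (A : List (Fin n)) (R : List (Matrix m m ℂ)), (∀ r ∈ R, r ∈ G) →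
    dd s (w * ((A.map y).prod * R.prod)) ((A.map εf).prod • ((A.map y).prod * (w * R.prod)))
      ≤ A.length * (1 + 2 * (A.length + R.length)) * K := by
  intro A
  induction A with
  | nil =>
    intro R hR
    simp only [List.map_nil, List.prod_nil, one_mul, one_smul, List.length_nil]
    rw [dd_eq]
    · positivity
    · rfl
  | cons a A' ih =>
    intro R hR
    set P' := (A'.map y).prod with hP'
    set c' := (A'.map εf).prod with hc'
    have hR' : ∀ r ∈ A'.map y ++ R, r ∈ G := by
      intro r hr
      rcases List.mem_append.mp hr with h | h
      · obtain ⟨i, _, rfl⟩ := List.mem_map.mp h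
        exact hy i
      · exact hR r h
    have hprod : (A'.map y ++ R).prod = P' * R.prod := List.prod_append
    have hlen : ((A'.map y ++ R).length : ℝ) = A'.length + R.length := by
      rw [List.length_append, List.length_map]; push_cast; ring
    have h1 : dd s (w * (((a :: A').map y).prod * R.prod))
        (εf a • (y a * (w * (P' * R.prod)))) ≤ K + 2 * (A'.length + R.length) * K := by
      have hsw := swap_move hK hGu hGhat hw (hy a) (hεf a) (hswap a) (A'.map y ++ R) hR'
      rw [hprod, hlen] at hsw
      have e1 : w * (((a :: A').map y).prod * R.prod) = w * (y a * (P' * R.prod)) := by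
        simp only [List.map_cons, List.prod_cons, mul_assoc]
        rfl
      rw [e1]
      exact hsw
    have h2 : dd s (εf a • (y a * (w * (P' * R.prod))))
        (((a :: A').map εf).prod • (((a :: A').map y).prod * (w * R.prod)))
        ≤ A'.length * (1 + 2 * (A'.length + R.length)) * K := by
      have e2 : ((a :: A').map εf).prod • (((a :: A').map y).prod * (w * R.prod))
          = εf a • (y a * (c' • (P' * (w * R.prod)))) := by
        rw [List.map_cons, List.map_cons, List.prod_cons, List.prod_cons, ← smul_smul,
          ← hc', ← hP']
        congr 1
        rw [mul_assoc, mul_smul_comm]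
      rw [e2, dd_smul, hεf a, one_mul, dd_left s (hGu (hy a))]
      exact ih R hR
    have htri := dd_triangle s (w * (((a :: A').map y).prod * R.prod))
      (εf a • (y a * (w * (P' * R.prod))))
      (((a :: A').map εf).prod • (((a :: A').map y).prod * (w * R.prod)))
    have hlen2 : (((a :: A').length : ℕ) : ℝ) = A'.length + 1 := by
      push_cast [List.length_cons]; ring
    have hA'0 : (0:ℝ) ≤ A'.length := by positivity
    have hR0 : (0:ℝ) ≤ R.length := by positivity
    rw [hlen2]
    nlinarith [htri, h1, h2]

lemma move_list (hK : 0 ≤ K)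
    (hGu : G ⊆ (Matrix.unitaryGroup m ℂ : Set _))
    (hGhat : ∀ g ∈ G, ∃ gh, gh ∈ Matrix.unitaryGroup m ℂ ∧ (∀ g' ∈ G, Commute gh g') ∧
      ‖(g - gh) * s‖ ≤ K)
    (y v : Fin n → Matrix m m ℂ) (hy : ∀ i, y i ∈ G) (hv : ∀ i, v i ∈ G)
    (εf : Fin n → Fin n → ℂ) (hεf : ∀ j i, ‖εf j i‖ = 1)
    (hswap : ∀ j i, ‖(v j * y i - εf j i • (y i * v j)) * s‖ ≤ K) :
    ∀ (B A : List (Fin n)) (R : List (Matrix m m ℂ)), (∀ r ∈ R, r ∈ G) →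
    dd s ((B.map v).prod * ((A.map y).prod * R.prod))
      ((B.map (fun j => (A.map (εf j)).prod)).prod •
        ((A.map y).prod * ((B.map v).prod * R.prod)))
      ≤ B.length * (A.length * (1 + 2 * (A.length + B.length + R.length))) * K := by
  intro B
  induction B with
  | nil =>
    intro A R hR
    simp only [List.map_nil, List.prod_nil, one_mul, one_smul, List.length_nil]
    rw [dd_eq]
    · positivity
    · rfl
  | cons b B' ih =>
    intro A R hR
    set PA := (A.map y).prod with hPA
    set VB := (B'.map v).prod with hVB
    set c' := (B'.map (fun j => (A.map (εf j)).prod)).prod with hcp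
    set cb := (A.map (εf b)).prod with hcb
    have hcb1 : ‖cb‖ = 1 := by
      refine norm_list_prod_one ?_
      intro c hc
      obtain ⟨i, _, rfl⟩ := List.mem_map.mp hc
      exact hεf b i
    have hc'1 : ‖c'‖ = 1 := by
      refine norm_list_prod_one ?_
      intro c hc
      obtain ⟨j, _, rfl⟩ := List.mem_map.mp hc
      refine norm_list_prod_one ?_
      intro c hc
      obtain ⟨i, _, rfl⟩ := List.mem_map.mp hc
      exact hεf j i
    have hRv : ∀ r ∈ B'.map v ++ R, r ∈ G := by
      intro r hr
      rcases List.mem_append.mp hr with h | h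
      · obtain ⟨i, _, rfl⟩ := List.mem_map.mp h
        exact hv i
      · exact hR r h
    -- step 1 : IH with prefix v b
    have h1 : dd s (((b :: B').map v).prod * (PA * R.prod))
        (c' • (v b * (PA * (VB * R.prod))))
        ≤ B'.length * (A.length * (1 + 2 * (A.length + B'.length + R.length))) * K := by
      have e1 : ((b :: B').map v).prod * (PA * R.prod) = v b * (VB * (PA * R.prod)) := by
        simp only [List.map_cons, List.prod_cons, mul_assoc]
        rfl
      have e2 : c' • (v b * (PA * (VB * R.prod))) = v b * (c' • (PA * (VB * R.prod))) := by
        rw [mul_smul_comm]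
      rw [e1, e2, dd_left s (hGu (hv b))]
      exact ih A R hR
    -- step 2 : move v b across PA
    have h2 : dd s (c' • (v b * (PA * (VB * R.prod))))
        ((c' * cb) • (PA * (v b * (VB * R.prod))))
        ≤ A.length * (1 + 2 * (A.length + (B'.length + R.length))) * K := by
      have hml := move_letter hK hGu hGhat y hy (v b) (hv b) (εf b) (hεf b) (hswap b)
        A (B'.map v ++ R) hRv
      have hprod : (B'.map v ++ R).prod = VB * R.prod := List.prod_append
      have hlen : ((B'.map v ++ R).length : ℝ) = B'.length + R.length := by
        rw [List.length_append, List.length_map]; push_cast; ring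
      rw [hprod, hlen] at hml
      have e3 : (c' * cb) • (PA * (v b * (VB * R.prod)))
          = c' • (cb • (PA * (v b * (VB * R.prod)))) := by rw [← smul_smul]
      rw [e3, dd_smul, hc'1, one_mul]
      exact hml
    have htri := dd_triangle s (((b :: B').map v).prod * (PA * R.prod))
      (c' • (v b * (PA * (VB * R.prod))))
      ((c' * cb) • (PA * (v b * (VB * R.prod))))
    have efin1 : (c' * cb) • (PA * (v b * (VB * R.prod)))
        = ((b :: B').map (fun j => (A.map (εf j)).prod)).prod •
          (PA * (((b :: B').map v).prod * R.prod)) := by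
      simp only [List.map_cons, List.prod_cons, mul_assoc, ← hcb, ← hcp]
      rw [mul_comm cb c']
    have hlen2 : (((b :: B').length : ℕ) : ℝ) = B'.length + 1 := by
      push_cast [List.length_cons]; ring
    rw [← efin1, hlen2]
    have hA0 : (0:ℝ) ≤ A.length := by positivity
    have hB0 : (0:ℝ) ≤ B'.length := by positivity
    have hR0 : (0:ℝ) ≤ R.length := by positivity
    have harith : (↑B'.length : ℝ) * (↑A.length * (1 + 2 * (↑A.length + ↑B'.length + ↑R.length))) * K
        + ↑A.length * (1 + 2 * (↑A.length + (↑B'.length + ↑R.length))) * K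
        ≤ (↑B'.length + 1) * (↑A.length * (1 + 2 * (↑A.length + (↑B'.length + 1) + ↑R.length))) * K := by
      nlinarith [mul_nonneg (mul_nonneg (by linarith : (0:ℝ) ≤ (↑B'.length:ℝ)+1) hA0) hK]
    linarith [htri, h1, h2, harith]

def insC {n : ℕ} (a : Fin n) : List (Fin n) → List (Fin n)
  | [] => [a]
  | b :: t => if a < b then a :: b :: t else if a = b then t else b :: insC a t

lemma insC_length {n : ℕ} (a : Fin n) : ∀ (M : List (Fin n)), (insC a M).length ≤ M.length + 1 := by
  intro M
  induction M with
  | nil => simp [insC]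
  | cons b t ih =>
    rw [insC]
    split
    · simp
    · split
      · simp
        omega
      · simp only [List.length_cons]
        omega

lemma insC_move (hK : 0 ≤ K)
    (hGu : G ⊆ (Matrix.unitaryGroup m ℂ : Set _))
    (hGhat : ∀ g ∈ G, ∃ gh, gh ∈ Matrix.unitaryGroup m ℂ ∧ (∀ g' ∈ G, Commute gh g') ∧
      ‖(g - gh) * s‖ ≤ K)
    (y : Fin n → Matrix m m ℂ) (hy : ∀ i, y i ∈ G)
    (hsq : ∀ i, y i * y i = 1)
    (hcomm : ∀ i j, i ≠ j → ‖(y i * y j - y j * y i) * s‖ ≤ K) (a : Fin n) :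
    ∀ (M : List (Fin n)) (R : List (Matrix m m ℂ)), (∀ r ∈ R, r ∈ G) →
    dd s (y a * ((M.map y).prod * R.prod)) (((insC a M).map y).prod * R.prod)
      ≤ M.length * (1 + 2 * (M.length + R.length)) * K := by
  intro M
  induction M with
  | nil =>
    intro R hR
    rw [dd_eq]
    · positivity
    · simp [insC]
  | cons b M' ih =>
    intro R hR
    set P' := (M'.map y).prod with hP'
    by_cases hab : a < b
    · rw [dd_eq]
      · positivity
      · simp only [insC, if_pos hab, List.map_cons, List.prod_cons, mul_assoc]
    · by_cases heq : a = b
      · subst heq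
        rw [dd_eq]
        · positivity
        · simp only [insC, lt_self_iff_false, if_neg, if_pos rfl, ite_false, ite_true,
            List.map_cons, List.prod_cons]
          rw [mul_assoc, ← mul_assoc (y a) (y a), hsq a, one_mul]
      · -- b < a
        have hRy : ∀ r ∈ M'.map y ++ R, r ∈ G := by
          intro r hr
          rcases List.mem_append.mp hr with h | h
          · obtain ⟨i, _, rfl⟩ := List.mem_map.mp h
            exact hy i
          · exact hR r h
        have hprod : (M'.map y ++ R).prod = P' * R.prod := List.prod_append
        have hlen : ((M'.map y ++ R).length : ℝ) = M'.length + R.length := by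
          rw [List.length_append, List.length_map]; push_cast; ring
        have h1 : dd s (y a * (((b :: M').map y).prod * R.prod))
            (y b * (y a * (P' * R.prod))) ≤ K + 2 * (M'.length + R.length) * K := by
          have hsw := swap_move hK hGu hGhat (hy a) (hy b) (norm_one)
            (by rw [one_smul]; exact hcomm a b heq) (M'.map y ++ R) hRy
          rw [hprod, hlen, one_smul] at hsw
          have e1 : y a * (((b :: M').map y).prod * R.prod) = y a * (y b * (P' * R.prod)) := by
            simp only [List.map_cons, List.prod_cons, mul_assoc]
            rfl
          rw [e1]
          exact hsw
        have h2 : dd s (y b * (y a * (P' * R.prod)))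
            (((insC a (b :: M')).map y).prod * R.prod)
            ≤ M'.length * (1 + 2 * (M'.length + R.length)) * K := by
          have e2 : ((insC a (b :: M')).map y).prod * R.prod
              = y b * (((insC a M').map y).prod * R.prod) := by
            simp only [insC, if_neg hab, if_neg heq, List.map_cons, List.prod_cons, mul_assoc]
          rw [e2, dd_left s (hGu (hy b))]
          exact ih R hR
        have htri := dd_triangle s (y a * (((b :: M').map y).prod * R.prod))
          (y b * (y a * (P' * R.prod)))
          (((insC a (b :: M')).map y).prod * R.prod)
        have hlen2 : (((b :: M').length : ℕ) : ℝ) = M'.length + 1 := by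
          push_cast [List.length_cons]; ring
        rw [hlen2]
        have hM0 : (0:ℝ) ≤ M'.length := by positivity
        have hR0 : (0:ℝ) ≤ R.length := by positivity
        nlinarith [htri, h1, h2]

lemma foldr_insC_length {n : ℕ} : ∀ (L M : List (Fin n)),
    (L.foldr insC M).length ≤ L.length + M.length := by
  intro L M
  induction L with
  | nil => simp
  | cons a L' ih =>
    simp only [List.foldr_cons, List.length_cons]
    calc (insC a (L'.foldr insC M)).length ≤ (L'.foldr insC M).length + 1 :=
          insC_length a _
      _ ≤ L'.length + M.length + 1 := by omega
      _ = L'.length + 1 + M.length := by omega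

lemma merge_move (hK : 0 ≤ K)
    (hGu : G ⊆ (Matrix.unitaryGroup m ℂ : Set _))
    (hGhat : ∀ g ∈ G, ∃ gh, gh ∈ Matrix.unitaryGroup m ℂ ∧ (∀ g' ∈ G, Commute gh g') ∧
      ‖(g - gh) * s‖ ≤ K)
    (y : Fin n → Matrix m m ℂ) (hy : ∀ i, y i ∈ G)
    (hsq : ∀ i, y i * y i = 1)
    (hcomm : ∀ i j, i ≠ j → ‖(y i * y j - y j * y i) * s‖ ≤ K) :
    ∀ (L M : List (Fin n)) (R : List (Matrix m m ℂ)), (∀ r ∈ R, r ∈ G) →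
    dd s ((L.map y).prod * ((M.map y).prod * R.prod)) (((L.foldr insC M).map y).prod * R.prod)
      ≤ L.length * ((L.length + M.length) * (1 + 2 * (L.length + M.length + R.length))) * K := by
  intro L
  induction L with
  | nil =>
    intro M R hR
    rw [dd_eq]
    · positivity
    · simp
  | cons a L' ih =>
    intro M R hR
    set F' := L'.foldr insC M with hF'
    have h1 : dd s (((a :: L').map y).prod * ((M.map y).prod * R.prod))
        (y a * ((F'.map y).prod * R.prod))
        ≤ L'.length * ((L'.length + M.length) * (1 + 2 * (L'.length + M.length + R.length))) * K := by
      have e1 : ((a :: L').map y).prod * ((M.map y).prod * R.prod)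
          = y a * ((L'.map y).prod * ((M.map y).prod * R.prod)) := by
        simp only [List.map_cons, List.prod_cons, mul_assoc]
      rw [e1, dd_left s (hGu (hy a))]
      exact ih M R hR
    have h2 : dd s (y a * ((F'.map y).prod * R.prod))
        ((((a :: L').foldr insC M).map y).prod * R.prod)
        ≤ F'.length * (1 + 2 * (F'.length + R.length)) * K := by
      have e2 : ((a :: L').foldr insC M) = insC a F' := by simp [hF']
      rw [e2]
      exact insC_move hK hGu hGhat y hy hsq hcomm a F' R hR
    have htri := dd_triangle s (((a :: L').map y).prod * ((M.map y).prod * R.prod))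
      (y a * ((F'.map y).prod * R.prod))
      ((((a :: L').foldr insC M).map y).prod * R.prod)
    have hFlen : (F'.length : ℝ) ≤ L'.length + M.length := by
      have := foldr_insC_length L' M
      push_cast
      exact_mod_cast this
    have hlen2 : (((a :: L').length : ℕ) : ℝ) = L'.length + 1 := by
      push_cast [List.length_cons]; ring
    rw [hlen2]
    have hL0 : (0:ℝ) ≤ L'.length := by positivity
    have hM0 : (0:ℝ) ≤ M.length := by positivity
    have hR0 : (0:ℝ) ≤ R.length := by positivity
    have hF0 : (0:ℝ) ≤ F'.length := by positivity
    have h2' : dd s (y a * ((F'.map y).prod * R.prod))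
        ((((a :: L').foldr insC M).map y).prod * R.prod)
        ≤ (L'.length + M.length) * (1 + 2 * (L'.length + M.length + R.length)) * K := by
      refine h2.trans ?_
      have hx : (0:ℝ) ≤ 1 + 2 * ((F'.length:ℝ) + R.length) := by linarith
      nlinarith [mul_nonneg (mul_nonneg (sub_nonneg.mpr hFlen) hx) hK,
        mul_nonneg (mul_nonneg (add_nonneg hL0 hM0)
          (by linarith [hFlen] : (0:ℝ) ≤ 2 * (((L'.length:ℝ) + M.length) - F'.length))) hK]
    nlinarith [htri, h1, h2',
      mul_nonneg (mul_nonneg (by linarith : (0:ℝ) ≤ (L'.length:ℝ) + 1 + M.length)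
        (by linarith : (0:ℝ) ≤ (L'.length:ℝ) + 1)) hK]
end Words

section Comb
variable {n : ℕ}

lemma insC_mem (a : Fin n) : ∀ (M : List (Fin n)), M.Pairwise (·<·) →
    ∀ c, c ∈ insC a M ↔ ((c ∈ M ∧ c ≠ a) ∨ (c ∉ M ∧ c = a)) := by
  intro M
  induction M with
  | nil => intro _ c; simp [insC]
  | cons b t ih =>
    intro hs c
    obtain ⟨hall, hts⟩ := List.pairwise_cons.mp hs
    have hbt : b ∉ t := fun h => lt_irrefl b (hall b h)
    rw [insC]
    by_cases hab : a < b
    · rw [if_pos hab]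
      have hat : a ∉ t := fun h => absurd (hall a h) (not_lt.mpr hab.le)
      have hne : a ≠ b := ne_of_lt hab
      simp only [List.mem_cons]
      by_cases hca : c = a <;> by_cases hcb : c = b <;> by_cases hct : c ∈ t <;> simp_all
    · rw [if_neg hab]
      by_cases heq : a = b
      · subst heq
        rw [if_pos rfl]
        simp only [List.mem_cons]
        by_cases hca : c = a <;> by_cases hct : c ∈ t <;> simp_all
      · rw [if_neg heq]
        have hba : b < a := lt_of_le_of_ne (not_lt.mp hab) (Ne.symm heq)
        simp only [List.mem_cons, ih hts c]
        by_cases hca : c = a <;> by_cases hcb : c = b <;> by_cases hct : c ∈ t <;> simp_all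

lemma insC_sorted (a : Fin n) : ∀ (M : List (Fin n)), M.Pairwise (·<·) →
    (insC a M).Pairwise (·<·) := by
  intro M
  induction M with
  | nil => intro _; simp [insC]
  | cons b t ih =>
    intro hs
    obtain ⟨hall, hts⟩ := List.pairwise_cons.mp hs
    by_cases hab : a < b
    · simp only [insC, if_pos hab]
      refine List.pairwise_cons.mpr ⟨?_, hs⟩
      intro x hx
      rcases List.mem_cons.mp hx with rfl | h
      · exact hab
      · exact lt_trans hab (hall x h)
    · by_cases heq : a = b
      · simp only [insC, if_neg hab, if_pos heq]
        exact hts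
      · have hba : b < a := lt_of_le_of_ne (not_lt.mp hab) (Ne.symm heq)
        simp only [insC, if_neg hab, if_neg heq]
        refine List.pairwise_cons.mpr ⟨?_, ih hts⟩
        intro x hx
        rcases (insC_mem a t hts x).mp hx with ⟨h, _⟩ | ⟨_, rfl⟩
        · exact hall x h
        · exact hba

lemma sorted_lt_eq_of_mem {l₁ l₂ : List (Fin n)} (h₁ : l₁.Pairwise (·<·)) (h₂ : l₂.Pairwise (·<·))
    (h : ∀ c, c ∈ l₁ ↔ c ∈ l₂) : l₁ = l₂ := by
  refine List.Perm.eq_of_pairwise (fun a b _ _ h1 h2 => absurd h2 (lt_asymm h1)) h₁ h₂ ?_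
  refine List.perm_of_nodup_nodup_toFinset_eq h₁.nodup h₂.nodup ?_
  ext c
  simp only [List.mem_toFinset]
  exact h c

lemma insC_sort_eq (a : Fin n) (D : Finset (Fin n)) :
    insC a (D.sort (·≤·)) = (symmDiff D {a}).sort (·≤·) := by
  refine sorted_lt_eq_of_mem (insC_sorted a _ (D.sortedLT_sort.pairwise)) (Finset.sortedLT_sort _).pairwise ?_
  intro c
  rw [insC_mem a _ (D.sortedLT_sort.pairwise) c]
  simp only [Finset.mem_sort, Finset.mem_symmDiff, Finset.mem_singleton]
  by_cases hca : c = a <;> simp_all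

lemma toFinset_symmDiff_insert (a : Fin n) (L : Finset (Fin n)) (ha : a ∉ L) (S' : Finset (Fin n)) :
    symmDiff (symmDiff S' L) {a} = symmDiff S' (insert a L) := by
  rw [symmDiff_assoc]
  congr 1
  ext c
  simp only [Finset.mem_symmDiff, Finset.mem_singleton, Finset.mem_insert]
  by_cases hca : c = a <;> simp_all

lemma foldr_insC_sort : ∀ (L : List (Fin n)), L.Nodup → ∀ (S' : Finset (Fin n)),
    L.foldr insC (S'.sort (·≤·)) = (symmDiff S' L.toFinset).sort (·≤·) := by
  intro L
  induction L with
  | nil =>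
    intro _ S'
    have : symmDiff S' (∅ : Finset (Fin n)) = S' := by simpa using symmDiff_bot S'
    simp [this]
  | cons a L ih =>
    intro hnd S'
    obtain ⟨ha, hnd'⟩ := List.nodup_cons.mp hnd
    have haf : a ∉ L.toFinset := fun h => ha (List.mem_toFinset.mp h)
    rw [List.foldr_cons, ih hnd' S', insC_sort_eq, toFinset_symmDiff_insert a _ haf,
      List.toFinset_cons]

lemma foldr_insC_sort_sort (S S' : Finset (Fin n)) :
    (S.sort (·≤·)).foldr insC (S'.sort (·≤·)) = (symmDiff S S').sort (·≤·) := by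
  rw [foldr_insC_sort _ (S.sort_nodup _) S', Finset.sort_toFinset, symmDiff_comm]

lemma prod_if_mem (j : Fin n) : ∀ (l : List (Fin n)), l.Nodup →
    (l.map (fun i => if i = j then (-1:ℂ) else 1)).prod = if j ∈ l then -1 else 1 := by
  intro l
  induction l with
  | nil => intro _; simp
  | cons a l ih =>
    intro hnd
    obtain ⟨ha, hnd'⟩ := List.nodup_cons.mp hnd
    rw [List.map_cons, List.prod_cons, ih hnd']
    by_cases haj : a = j
    · subst haj
      simp [ha]
    · simp only [if_neg haj, one_mul, List.mem_cons]
      by_cases hjl : j ∈ l <;> simp_all [Ne.symm haj]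

lemma sign_value (T S' : Finset (Fin n)) :
    ((T.sort (·≤·)).map (fun j => ((S'.sort (·≤·)).map
        (fun i => if i = j then (-1:ℂ) else 1)).prod)).prod
      = (-1 : ℂ) ^ ((T ∩ S').card) := by
  have e1 : ∀ j, ((S'.sort (·≤·)).map (fun i => if i = j then (-1:ℂ) else 1)).prod
      = if j ∈ S' then -1 else 1 := by
    intro j
    rw [prod_if_mem j _ (S'.sort_nodup _)]
    simp [Finset.mem_sort]
  have e2 : ((T.sort (·≤·)).map (fun j => ((S'.sort (·≤·)).map
      (fun i => if i = j then (-1:ℂ) else 1)).prod)).prod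
      = ((T.sort (·≤·)).map (fun j => if j ∈ S' then (-1:ℂ) else 1)).prod := by
    congr 1
    exact List.map_congr_left (fun j _ => e1 j)
  rw [e2]
  rw [← List.prod_toFinset _ (T.sort_nodup _), Finset.sort_toFinset]
  rw [Finset.prod_ite _ _]
  simp only [Finset.prod_const, Finset.prod_const_one, mul_one]
  rw [Finset.filter_mem_eq_inter]
  simp

end Comb

section SqrtSec
open scoped MatrixOrder

lemma exists_herm_sqrt {m : Type} [Fintype m] [DecidableEq m] (ρ : Matrix m m ℂ)
    (hρ : ρ.PosSemidef) : ∃ s : Matrix m m ℂ, s * s = ρ ∧ sᴴ = s :=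
  ⟨CFC.sqrt ρ, CFC.sqrt_mul_sqrt_self ρ hρ.nonneg, (CFC.sqrt_nonneg ρ).posSemidef.isHermitian⟩

end SqrtSec
end PauliStab

open PauliStab in
/-- Stability of approximate Pauli relations: there is a universal constant `C > 0` such
that whenever self-adjoint unitaries `x_1,…,x_n,z_1,…,z_n` satisfy the approximate
anticommutation, commutation, and approximate-centrality conditions up to `δ` in squared
ρ-norm, the words `f(α,S,T)` satisfy the Weyl–Heisenberg multiplication rule up to
`C n⁶ δ` in squared ρ-norm. -/
theorem pauliWord_approximate_homomorphism :
    ∃ C : ℝ, 0 < C ∧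
      ∀ (n : ℕ), 1 ≤ n →
      ∀ (m : Type) [Fintype m] [DecidableEq m],
      ∀ (ρ : Matrix m m ℂ), ρ.PosSemidef → ρ.trace = 1 →
      ∀ (δ : ℝ), 0 ≤ δ →
      ∀ (x z : Fin n → Matrix m m ℂ),
      (∀ i, (x i)ᴴ = x i ∧ x i ∈ Matrix.unitaryGroup m ℂ) →
      (∀ i, (z i)ᴴ = z i ∧ z i ∈ Matrix.unitaryGroup m ℂ) →
      (∀ i, rhoNormSq ρ (x i * z i + z i * x i) ≤ δ) →
      (∀ i j, i ≠ j →
        rhoNormSq ρ (x i * x j - x j * x i) ≤ δ ∧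
        rhoNormSq ρ (z i * z j - z j * z i) ≤ δ ∧
        rhoNormSq ρ (x i * z j - z j * x i) ≤ δ) →
      (∀ w ∈ Set.range x ∪ Set.range z,
        ∃ what : Matrix m m ℂ, what ∈ Matrix.unitaryGroup m ℂ ∧
          (∀ i, Commute what (x i) ∧ Commute what (z i)) ∧
          rhoNormSq ρ (w - what) ≤ δ) →
      ∀ (α α' : Bool) (S T S' T' : Finset (Fin n)),
        rhoNormSq ρ
          (pauliWord x z α S T * pauliWord x z α' S' T' -
            pauliWord x z (Bool.xor (Bool.xor α α') (decide ((T ∩ S').card % 2 = 1)))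
              (symmDiff S S') (symmDiff T T'))
          ≤ C * (n : ℝ) ^ 6 * δ := by
  classical
  refine ⟨2025, by norm_num, ?_⟩
  intro n hn m _ _ ρ hρ _htr δ hδ x z hx hz hAC hCC hHat α α' S T S' T'
  obtain ⟨s, hss0, hherm0⟩ := exists_herm_sqrt ρ hρ
  set K : ℝ := Real.sqrt δ with hKdef
  have hK : 0 ≤ K := Real.sqrt_nonneg δ
  have hKsq : K ^ 2 = δ := Real.sq_sqrt hδ
  have hrho : ∀ M : Matrix m m ℂ, rhoNormSq ρ M = ‖M * s‖ ^ 2 := by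
    intro M
    have hss : s * s = ρ := hss0
    have hherm : sᴴ = s := hherm0
    have h1 : (Mᴴ * M * ρ).trace = ((M * s)ᴴ * (M * s)).trace := by
      calc (Mᴴ * M * ρ).trace = ((Mᴴ * M * s) * s).trace := by rw [← hss, ← mul_assoc]
        _ = (s * (Mᴴ * M * s)).trace := Matrix.trace_mul_comm _ _
        _ = ((M * s)ᴴ * (M * s)).trace := by
            simp only [Matrix.conjTranspose_mul, hherm, mul_assoc]
    rw [rhoNormSq, h1, trace_eq_frob]
  have hsqle : ∀ M : Matrix m m ℂ, rhoNormSq ρ M ≤ δ → ‖M * s‖ ≤ K := by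
    intro M h
    rw [hrho] at h
    have h2 := Real.sqrt_le_sqrt h
    rwa [Real.sqrt_sq (norm_nonneg _)] at h2
  set G : Set (Matrix m m ℂ) := Set.range x ∪ Set.range z with hG
  have hxG : ∀ i, x i ∈ G := fun i => Or.inl ⟨i, rfl⟩
  have hzG : ∀ i, z i ∈ G := fun i => Or.inr ⟨i, rfl⟩
  have hGu : G ⊆ (Matrix.unitaryGroup m ℂ : Set _) := by
    rintro g (⟨i, rfl⟩ | ⟨i, rfl⟩)
    · exact (hx i).2
    · exact (hz i).2
  have hGhat : ∀ g ∈ G, ∃ gh, gh ∈ Matrix.unitaryGroup m ℂ ∧ (∀ g' ∈ G, Commute gh g') ∧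
      ‖(g - gh) * s‖ ≤ K := by
    intro g hg
    obtain ⟨w, h1, h2, h3⟩ := hHat g hg
    refine ⟨w, h1, ?_, hsqle _ h3⟩
    rintro g' (⟨i, rfl⟩ | ⟨i, rfl⟩)
    · exact (h2 i).1
    · exact (h2 i).2
  -- squares are exactly 1
  have hsqX : ∀ i, x i * x i = 1 := by
    intro i
    have h := Unitary.star_mul_self_of_mem (hx i).2
    rwa [Matrix.star_eq_conjTranspose, (hx i).1] at h
  have hsqZ : ∀ i, z i * z i = 1 := by
    intro i
    have h := Unitary.star_mul_self_of_mem (hz i).2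
    rwa [Matrix.star_eq_conjTranspose, (hz i).1] at h
  -- approximate commutation data
  have hXX : ∀ i j, i ≠ j → ‖(x i * x j - x j * x i) * s‖ ≤ K :=
    fun i j h => hsqle _ (hCC i j h).1
  have hZZ : ∀ i j, i ≠ j → ‖(z i * z j - z j * z i) * s‖ ≤ K :=
    fun i j h => hsqle _ (hCC i j h).2.1
  set εf : Fin n → Fin n → ℂ := fun j i => if i = j then (-1 : ℂ) else 1 with hεfdef
  have hεf : ∀ j i, ‖εf j i‖ = 1 := by
    intro j i
    by_cases h : i = j <;> simp [hεfdef, h]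
  have hswapZX : ∀ j i, ‖(z j * x i - εf j i • (x i * z j)) * s‖ ≤ K := by
    intro j i
    by_cases h : i = j
    · subst h
      have e : z i * x i - εf i i • (x i * z i) = x i * z i + z i * x i := by
        simp only [hεfdef, if_pos rfl, neg_smul, one_smul, sub_neg_eq_add]
        abel
      rw [e]
      exact hsqle _ (hAC i)
    · have e : z j * x i - εf j i • (x i * z j) = -((x i * z j - z j * x i)) := by
        simp only [hεfdef, if_neg h, one_smul]
        abel
      rw [e, neg_mul, norm_neg]
      exact hsqle _ (hCC i j (fun hij => h (hij ▸ rfl))).2.2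
  -- notation
  set sS := S.sort (· ≤ ·) with hsS
  set sT := T.sort (· ≤ ·) with hsT
  set sS' := S'.sort (· ≤ ·) with hsS'
  set sT' := T'.sort (· ≤ ·) with hsT'
  set XS := ((sS.map x).prod) with hXS
  set ZT := ((sT.map z).prod) with hZT
  set XS' := ((sS'.map x).prod) with hXS'2
  set ZT' := ((sT'.map z).prod) with hZT'2
  set Xd := (((symmDiff S S').sort (· ≤ ·)).map x).prod with hXd
  set Ze := (((symmDiff T T').sort (· ≤ ·)).map z).prod with hZe
  set ε : ℂ := (-1 : ℂ) ^ ((T ∩ S').card) with hε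
  have hεnorm : ‖ε‖ = 1 := by
    rw [hε, norm_pow, norm_neg, norm_one, one_pow]
  have hmemmapz : ∀ (l : List (Fin n)), ∀ r ∈ l.map z, r ∈ G := by
    intro l r hr
    obtain ⟨i, _, rfl⟩ := List.mem_map.mp hr
    exact hzG i
  have hmemmapx : ∀ (l : List (Fin n)), ∀ r ∈ l.map x, r ∈ G := by
    intro l r hr
    obtain ⟨i, _, rfl⟩ := List.mem_map.mp hr
    exact hxG i
  have hXSU : XS ∈ Matrix.unitaryGroup m ℂ := by
    refine Submonoid.list_prod_mem _ ?_
    intro r hr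
    exact hGu (hmemmapx sS r hr)
  have hXdU : Xd ∈ Matrix.unitaryGroup m ℂ := by
    refine Submonoid.list_prod_mem _ ?_
    intro r hr
    exact hGu (hmemmapx _ r hr)
  -- Step 1 : move the z-letters of T across the x-letters of S'
  have step1 : dd s (XS * (ZT * (XS' * ZT')))
      (ε • (XS * (XS' * (ZT * ZT'))))
      ≤ (sT.length : ℝ) * (sS'.length * (1 + 2 * (sS'.length + sT.length + sT'.length))) * K := by
    have h := move_list hK hGu hGhat x z hxG hzG εf hεf hswapZX sT sS' (sT'.map z)
      (hmemmapz sT')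
    have hc' : (sT.map (fun j => (sS'.map (εf j)).prod)).prod = ε := by
      rw [hε, hsT, hsS']
      exact sign_value T S'
    rw [hc'] at h
    have e2 : XS * (ε • (XS' * (ZT * ZT'))) = ε • (XS * (XS' * (ZT * ZT'))) :=
      mul_smul_comm _ _ _
    calc dd s (XS * (ZT * (XS' * ZT'))) (ε • (XS * (XS' * (ZT * ZT'))))
        = dd s (XS * (ZT * (XS' * ZT'))) (XS * (ε • (XS' * (ZT * ZT')))) := by rw [e2]
      _ = dd s (ZT * (XS' * ZT')) (ε • (XS' * (ZT * ZT'))) := dd_left s hXSU _ _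
      _ ≤ _ := by
          have hlz : (sT'.map z).length = sT'.length := List.length_map _
          rw [hlz] at h
          exact h
  -- Step 2 : merge the two x-words
  have step2 : dd s (ε • (XS * (XS' * (ZT * ZT')))) (ε • (Xd * (ZT * ZT')))
      ≤ (sS.length : ℝ) * ((sS.length + sS'.length) *
          (1 + 2 * (sS.length + sS'.length + (sT.length + sT'.length)))) * K := by
    have h := merge_move hK hGu hGhat x hxG hsqX hXX sS sS' (sT.map z ++ sT'.map z)
      (by
        intro r hr
        rcases List.mem_append.mp hr with hh | hh
        · exact hmemmapz sT r hh
        · exact hmemmapz sT' r hh)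
    have hfold : (sS.foldr insC sS') = (symmDiff S S').sort (· ≤ ·) := by
      rw [hsS, hsS']
      exact foldr_insC_sort_sort S S'
    have hprod2 : ((sT.map z ++ sT'.map z)).prod = ZT * ZT' := List.prod_append
    have hlen2 : ((sT.map z ++ sT'.map z).length : ℝ) = sT.length + sT'.length := by
      rw [List.length_append, List.length_map, List.length_map]
      push_cast
      ring
    rw [hfold, hprod2, hlen2] at h
    rw [dd_smul, hεnorm, one_mul]
    exact h
  -- Step 3 : merge the two z-words
  have step3 : dd s (ε • (Xd * (ZT * ZT'))) (ε • (Xd * Ze))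
      ≤ (sT.length : ℝ) * ((sT.length + sT'.length) *
          (1 + 2 * (sT.length + sT'.length + 0))) * K := by
    have h := merge_move hK hGu hGhat z hzG hsqZ hZZ sT sT' ([])
      (by intro r hr; exact absurd hr List.not_mem_nil)
    have hfold : (sT.foldr insC sT') = (symmDiff T T').sort (· ≤ ·) := by
      rw [hsT, hsT']
      exact foldr_insC_sort_sort T T'
    rw [hfold] at h
    simp only [List.prod_nil, mul_one, List.length_nil, Nat.cast_zero] at h
    rw [dd_smul, hεnorm, one_mul, dd_left s hXdU]
    exact h
  -- signs
  have hsign : (if (Bool.xor (Bool.xor α α') (decide ((T ∩ S').card % 2 = 1))) then (-1:ℂ) else 1)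
      = ((if α then (-1:ℂ) else 1) * (if α' then (-1:ℂ) else 1)) * ε := by
    rcases Nat.even_or_odd ((T ∩ S').card) with he | ho
    · have hp : ¬((T ∩ S').card % 2 = 1) := by
        have := Nat.even_iff.mp he
        omega
      have hεe : ε = 1 := by rw [hε]; exact Even.neg_one_pow he
      cases α <;> cases α' <;> simp [hp, hεe]
    · have hp : ((T ∩ S').card % 2 = 1) := Nat.odd_iff.mp ho
      have hεe : ε = -1 := by rw [hε]; exact Odd.neg_one_pow ho
      cases α <;> cases α' <;> simp [hp, hεe]
  have hpwmul : pauliWord x z α S T * pauliWord x z α' S' T'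
      = (((if α then (-1:ℂ) else 1) * (if α' then (-1:ℂ) else 1))) •
        (XS * (ZT * (XS' * ZT'))) := by
    rw [pauliWord, pauliWord, smul_mul_assoc, mul_smul_comm, smul_smul, mul_assoc]
  have hpw3 : pauliWord x z (Bool.xor (Bool.xor α α') (decide ((T ∩ S').card % 2 = 1)))
      (symmDiff S S') (symmDiff T T')
      = (((if α then (-1:ℂ) else 1) * (if α' then (-1:ℂ) else 1)) * ε) • (Xd * Ze) := by
    rw [pauliWord, hsign]
  have hc12 : ‖(if α then (-1:ℂ) else 1) * (if α' then (-1:ℂ) else 1)‖ = 1 := by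
    cases α <;> cases α' <;> simp
  -- total distance bound
  have htot : dd s (pauliWord x z α S T * pauliWord x z α' S' T')
      (pauliWord x z (Bool.xor (Bool.xor α α') (decide ((T ∩ S').card % 2 = 1)))
        (symmDiff S S') (symmDiff T T'))
      ≤ 35 * (n:ℝ)^3 * K := by
    have e3 : (((if α then (-1:ℂ) else 1) * (if α' then (-1:ℂ) else 1)) * ε) • (Xd * Ze)
        = ((if α then (-1:ℂ) else 1) * (if α' then (-1:ℂ) else 1)) • (ε • (Xd * Ze)) :=
      mul_smul _ _ _
    rw [hpwmul, hpw3, e3, dd_smul, hc12, one_mul]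
    have htri1 := dd_triangle s (XS * (ZT * (XS' * ZT'))) (ε • (XS * (XS' * (ZT * ZT'))))
      (ε • (Xd * Ze))
    have htri2 := dd_triangle s (ε • (XS * (XS' * (ZT * ZT')))) (ε • (Xd * (ZT * ZT')))
      (ε • (Xd * Ze))
    have hcle : ∀ (F : Finset (Fin n)), ((F.sort (· ≤ ·)).length : ℝ) ≤ n := by
      intro F
      rw [Finset.length_sort]
      have := Finset.card_le_univ F
      have h3 : F.card ≤ n := by
        have h4 := Finset.card_le_univ F
        rwa [Fintype.card_fin] at h4
      exact_mod_cast Nat.cast_le.mpr h3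
    have haS := hcle S
    have haT := hcle T
    have haS' := hcle S'
    have haT' := hcle T'
    have h0S : (0:ℝ) ≤ sS.length := by positivity
    have h0T : (0:ℝ) ≤ sT.length := by positivity
    have h0S' : (0:ℝ) ≤ sS'.length := by positivity
    have h0T' : (0:ℝ) ≤ sT'.length := by positivity
    have hn1 : (1:ℝ) ≤ (n:ℝ) := by exact_mod_cast hn
    have h0n : (0:ℝ) ≤ (n:ℝ) := by positivity
    have hn23 : (n:ℝ)^2 ≤ (n:ℝ)^3 := by nlinarith
    have B1 : (sT.length : ℝ) * (sS'.length * (1 + 2 * (sS'.length + sT.length + sT'.length))) * K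
        ≤ 7 * (n:ℝ)^3 * K := by
      calc (sT.length : ℝ) * (sS'.length * (1 + 2 * (sS'.length + sT.length + sT'.length))) * K
          ≤ (n:ℝ) * ((n:ℝ) * (1 + 2 * ((n:ℝ) + (n:ℝ) + (n:ℝ)))) * K := by gcongr
        _ ≤ 7 * (n:ℝ)^3 * K := by nlinarith [mul_nonneg (sub_nonneg.mpr hn23) hK]
    have B2 : (sS.length : ℝ) * ((sS.length + sS'.length) *
          (1 + 2 * (sS.length + sS'.length + (sT.length + sT'.length)))) * K
        ≤ 18 * (n:ℝ)^3 * K := by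
      calc (sS.length : ℝ) * ((sS.length + sS'.length) *
            (1 + 2 * (sS.length + sS'.length + (sT.length + sT'.length)))) * K
          ≤ (n:ℝ) * (((n:ℝ) + (n:ℝ)) * (1 + 2 * ((n:ℝ) + (n:ℝ) + ((n:ℝ) + (n:ℝ))))) * K := by
            gcongr
        _ ≤ 18 * (n:ℝ)^3 * K := by nlinarith [mul_nonneg (sub_nonneg.mpr hn23) hK]
    have B3 : (sT.length : ℝ) * ((sT.length + sT'.length) *
          (1 + 2 * (sT.length + sT'.length + 0))) * K
        ≤ 10 * (n:ℝ)^3 * K := by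
      calc (sT.length : ℝ) * ((sT.length + sT'.length) *
            (1 + 2 * (sT.length + sT'.length + 0))) * K
          ≤ (n:ℝ) * (((n:ℝ) + (n:ℝ)) * (1 + 2 * ((n:ℝ) + (n:ℝ) + 0))) * K := by gcongr
        _ ≤ 10 * (n:ℝ)^3 * K := by nlinarith [mul_nonneg (sub_nonneg.mpr hn23) hK]
    linarith [htri1, htri2, step1, step2, step3, B1, B2, B3]
  -- conclude
  have hdd0 : (0:ℝ) ≤ dd s (pauliWord x z α S T * pauliWord x z α' S' T')
      (pauliWord x z (Bool.xor (Bool.xor α α') (decide ((T ∩ S').card % 2 = 1)))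
        (symmDiff S S') (symmDiff T T')) := dd_nonneg s _ _
  have hsq := pow_le_pow_left₀ hdd0 htot 2
  have hfin : rhoNormSq ρ
      (pauliWord x z α S T * pauliWord x z α' S' T' -
        pauliWord x z (Bool.xor (Bool.xor α α') (decide ((T ∩ S').card % 2 = 1)))
          (symmDiff S S') (symmDiff T T')) ≤ (35 * (n:ℝ)^3 * K)^2 := by
    rw [hrho]
    exact hsq
  refine hfin.trans ?_
  have e5 : (35 * (n:ℝ)^3 * K)^2 = 1225 * (n:ℝ)^6 * δ := by
    rw [show (35 * (n:ℝ)^3 * K)^2 = 1225 * (n:ℝ)^6 * K^2 by ring, hKsq]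
  rw [e5]
  have h6 : (0:ℝ) ≤ (n:ℝ)^6 * δ := by positivity
  nlinarith
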